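/- Let μ ∈ (1,2) and n ≥ 1. The set of segment-types 𝒯_n has cardinality at most 2n, i.e. |𝒯_n| ≤ 2n. -/

import Mathlib

open Set MeasureTheory

/-- The tent map `f(x) = μx` for `x ≤ 1/2` and `μ(1-x)` for `x ≥ 1/2`. -/
noncomputable def tentMap (μ : ℝ) (x : ℝ) : ℝ :=
  if x ≤ 1/2 then μ * x else μ * (1 - x)

/-- `tentBit μ x k` is the `(k+1)`-st bit `b_{k+1}` of the tent code of `x`. -/
noncomputable def tentBit (μ x : ℝ) : ℕ → Bool
  | 0 => if 1/2 ≤ x then true else false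
  | k + 1 =>
    if (tentMap μ)^[k+1] x < 1/2 then tentBit μ x k
    else if 1/2 < (tentMap μ)^[k+1] x then !(tentBit μ x k)
    else true

/-- The tent code `γ^n(x) = b_1 ⋯ b_n`. -/
noncomputable def tentCode (μ : ℝ) (n : ℕ) (x : ℝ) : List Bool :=
  (List.range n).map (tentBit μ x)

/-- The tent language `L_n = {γ^n(x) : x ∈ [0,1)}`. -/
def tentLang (μ : ℝ) (n : ℕ) : Set (List Bool) :=
  {w | ∃ x ∈ Set.Ico (0:ℝ) 1, tentCode μ n x = w}

/-- The segment-type `T(w) = {f^n(x) : x ∈ [0,1), γ^n(x) = w}`. -/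
def segType (μ : ℝ) (n : ℕ) (w : List Bool) : Set ℝ :=
  {y | ∃ x ∈ Set.Ico (0:ℝ) 1, tentCode μ n x = w ∧ (tentMap μ)^[n] x = y}

/-- The set of segment-types `𝒯_n = {T(w) : w ∈ L_n}`. -/
def typeSet (μ : ℝ) (n : ℕ) : Set (Set ℝ) :=
  {S | ∃ w ∈ tentLang μ n, segType μ n w = S}

/-- `I_i = T(γ^i(1/2))`. -/
noncomputable def Iseg (μ : ℝ) (i : ℕ) : Set ℝ :=
  segType μ i (tentCode μ i (1/2))

/-- `Ī_i = T(c̄_i)` where `c̄_i` is the bitwise complement of `γ^i(1/2)`. -/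
noncomputable def Isegbar (μ : ℝ) (i : ℕ) : Set ℝ :=
  segType μ i ((tentCode μ i (1/2)).map (fun b => !b))

/-- The length of the interval `T(w)` (zero if `T(w)` is empty). -/
noncomputable def segLen (μ : ℝ) (n : ℕ) (w : List Bool) : ℝ :=
  (MeasureTheory.volume (segType μ n w)).toReal

/-!
For `n ≥ 1` every segment type is `[a, c)` or `(a, c]` with `(a, c)` one of the `n` pairs
`critSeg μ j`, `j < n`: starting from `[0, μ/2]`, `critSeg μ (j + 1)` is the image under `f`
of the half of `critSeg μ j` that contains the critical value `c_{j+1} = f^{j+1}(1/2)`.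

A segment type of length `n + 1` is the image under `f` of one half (cut at `1/2`) of a
segment type of length `n`. The half containing `c_{j+1}` gives `critSeg μ (j + 1)`; the
other half is nonempty only when `critSeg μ j` straddles `1/2`. Every endpoint of
`critSeg μ j` is *anchored*: it is `0`, or a critical value `c_{t+1}` with
`critSeg μ j ⊆ critSeg μ t`. For the endpoint `e` in the other half, `critSeg μ t` then
straddles `1/2` too, `e` is its endpoint on that side, and so `f` of that half is already
`critSeg μ (t + 1)`. Anchoring propagates because `f` maps an anchored endpoint to an
anchored one, or to `c_1 = μ/2`, which is anchored by `critSeg μ 0`.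
-/

section

variable {μ : ℝ}

lemma tentMap_of_le_half {y : ℝ} (h : y ≤ 1/2) : tentMap μ y = μ * y := if_pos h

lemma tentMap_half : tentMap μ (1/2) = μ / 2 := by
  rw [tentMap_of_le_half le_rfl]; ring

lemma tentMap_of_half_le {y : ℝ} (h : 1/2 ≤ y) : tentMap μ y = μ * (1 - y) := by
  rcases h.eq_or_lt with rfl | h
  · rw [tentMap_half]; ring
  · exact if_neg (not_le.2 h)

noncomputable def nextBit (p : Bool) (y : ℝ) : Bool :=
  if y < 1/2 then p else if 1/2 < y then !p else true

-- The first bit follows the same rule as the later ones, with a fictitious previous bit `false`.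
lemma tentBit_zero (x : ℝ) : tentBit μ x 0 = nextBit false x := by
  simp [tentBit, nextBit, ← decide_not]

lemma tentBit_succ (x : ℝ) (k : ℕ) :
    tentBit μ x (k + 1) = nextBit (tentBit μ x k) ((tentMap μ)^[k + 1] x) := rfl

lemma tentCode_length (n : ℕ) (x : ℝ) : (tentCode μ n x).length = n := by
  simp [tentCode]

lemma tentCode_succ (n : ℕ) (x : ℝ) :
    tentCode μ (n + 1) x =
      tentCode μ n x ++ [nextBit ((tentCode μ n x).getLastD false) ((tentMap μ)^[n] x)] := by
  cases n with
  | zero => simp [tentCode, tentBit_zero]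
  | succ k => simp [tentCode, List.range_succ, tentBit_succ]

lemma segType_zero : segType μ 0 [] = Ico 0 1 := by
  ext y
  simp [segType, tentCode, eq_comm]

lemma segType_append_singleton {n : ℕ} {w : List Bool} (hw : w.length = n) (b : Bool) :
    segType μ (n + 1) (w ++ [b]) =
      tentMap μ '' (segType μ n w ∩ {y | nextBit (w.getLastD false) y = b}) := by
  ext y
  simp only [segType, mem_image, mem_inter_iff, mem_ofPred_eq, tentCode_succ]
  constructor
  · rintro ⟨x, hx, hcode, rfl⟩
    obtain ⟨rfl, hb⟩ := List.append_inj hcode (by rw [tentCode_length, hw])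
    exact ⟨_, ⟨⟨x, hx, rfl, rfl⟩, by simpa using hb⟩,
      (Function.iterate_succ_apply' _ _ _).symm⟩
  · rintro ⟨_, ⟨⟨x, hx, rfl, rfl⟩, rfl⟩, rfl⟩
    exact ⟨x, hx, rfl, Function.iterate_succ_apply' _ _ _⟩

-- A segment type is `[a, c)` or `(a, c]` according to the last bit of its code.
def halfOpen (p : Bool) (I : ℝ × ℝ) : Set ℝ :=
  if p then Ioc I.1 I.2 else Ico I.1 I.2

lemma halfOpen_nonempty_iff {p : Bool} {I : ℝ × ℝ} :
    (halfOpen p I).Nonempty ↔ I.1 < I.2 := by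
  cases p <;> simp [halfOpen]

lemma halfOpen_inter_nextBit (p b : Bool) (I : ℝ × ℝ) :
    halfOpen p I ∩ {y | nextBit p y = b} =
      halfOpen p (if p = b then (I.1, min I.2 (1/2)) else (max I.1 (1/2), I.2)) := by
  ext y
  grind [halfOpen, nextBit]

lemma image_tentMap_halfOpen_of_le_half (hμ : 0 < μ) (p : Bool) {I : ℝ × ℝ}
    (hI : I.2 ≤ 1/2) : tentMap μ '' halfOpen p I = halfOpen p (μ * I.1, μ * I.2) := by
  have hsub : halfOpen p I ⊆ Iic (1/2) := by
    cases p
    · exact fun y hy => hy.2.le.trans hI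
    · exact fun y hy => hy.2.trans hI
  have heq : EqOn (tentMap μ) (μ * ·) (halfOpen p I) := fun y hy => tentMap_of_le_half (hsub hy)
  rw [heq.image_eq]
  cases p
  · exact image_mul_left_Ico hμ _ _
  · exact image_mul_left_Ioc hμ _ _

lemma image_tentMap_halfOpen_of_half_le (hμ : 0 < μ) (p : Bool) {I : ℝ × ℝ}
    (hI : 1/2 ≤ I.1) :
    tentMap μ '' halfOpen p I = halfOpen (!p) (μ * (1 - I.2), μ * (1 - I.1)) := by
  have hsub : halfOpen p I ⊆ Ici (1/2) := by
    cases p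
    · exact fun y hy => hI.trans hy.1
    · exact fun y hy => hI.trans hy.1.le
  have heq : EqOn (tentMap μ) ((μ * ·) ∘ (1 - ·)) (halfOpen p I) :=
    fun y hy => tentMap_of_half_le (hsub hy)
  rw [heq.image_eq, image_comp]
  cases p <;> simp [halfOpen, image_mul_left_Ioc hμ, image_mul_left_Ico hμ]

/-- The endpoints of `f(J ∩ [0, 1/2])` (for `r = false`) or of `f(J ∩ [1/2, 1])`
(for `r = true`), where `J` is the interval with endpoints `I`. -/
noncomputable def branchImage (μ : ℝ) (r : Bool) (I : ℝ × ℝ) : ℝ × ℝ :=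
  if r then (μ * (1 - I.2), μ * (1 - max I.1 (1/2))) else (μ * I.1, μ * min I.2 (1/2))

lemma image_tentMap_halfOpen_inter_nextBit (hμ : 0 < μ) (p b : Bool) (I : ℝ × ℝ) :
    tentMap μ '' (halfOpen p I ∩ {y | nextBit p y = b}) =
      halfOpen b (branchImage μ (p != b) I) := by
  rw [halfOpen_inter_nextBit]
  by_cases hpb : p = b
  · subst hpb
    rw [if_pos rfl, image_tentMap_halfOpen_of_le_half hμ p (min_le_right _ _)]
    simp [branchImage]
  · rw [if_neg hpb, image_tentMap_halfOpen_of_half_le hμ p (le_max_right _ _)]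
    obtain rfl : b = !p := by cases p <;> cases b <;> simp_all
    simp [branchImage]

lemma branchImage_mono (hμ : 0 ≤ μ) (r : Bool) {I J : ℝ × ℝ} (h₁ : J.1 ≤ I.1)
    (h₂ : I.2 ≤ J.2) :
    (branchImage μ r J).1 ≤ (branchImage μ r I).1 ∧
      (branchImage μ r I).2 ≤ (branchImage μ r J).2 := by
  cases r <;> simp only [branchImage, Bool.false_eq_true, ↓reduceIte] <;> constructor <;> gcongr

noncomputable def critOrbit (μ : ℝ) (i : ℕ) : ℝ := (tentMap μ)^[i] (1/2)

lemma critOrbit_succ (i : ℕ) : critOrbit μ (i + 1) = tentMap μ (critOrbit μ i) :=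
  Function.iterate_succ_apply' _ _ _

lemma critOrbit_one : critOrbit μ 1 = μ / 2 := tentMap_half

/-- For `j ≥ 1`, `critSeg μ j` is the image under `f` of the branch of `critSeg μ (j - 1)` that
contains `critOrbit μ j` (when `critOrbit μ j = 1/2`, the branch of positive length). -/
noncomputable def critSeg (μ : ℝ) : ℕ → ℝ × ℝ
  | 0 => (0, μ / 2)
  | j + 1 => branchImage μ (decide (1/2 ≤ (critSeg μ j).1 ∨ 1/2 < critOrbit μ (j + 1)))
      (critSeg μ j)

lemma critSeg_succ (j : ℕ) :
    critSeg μ (j + 1) =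
      branchImage μ (decide (1/2 ≤ (critSeg μ j).1 ∨ 1/2 < critOrbit μ (j + 1))) (critSeg μ j) :=
  rfl

def Anchored (μ : ℝ) (j : ℕ) (e : ℝ) : Prop :=
  e = 0 ∨ ∃ t ≤ j, e = critOrbit μ (t + 1) ∧
    (critSeg μ t).1 ≤ (critSeg μ j).1 ∧ (critSeg μ j).2 ≤ (critSeg μ t).2

lemma anchored_div_two {j : ℕ} (h₀ : 0 ≤ (critSeg μ j).1)
    (h : (critSeg μ j).2 ≤ μ / 2) : Anchored μ j (μ / 2) :=
  Or.inr ⟨0, j.zero_le, critOrbit_one.symm, h₀, h⟩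

lemma Anchored.tentMap_of_branch (hμ : 0 ≤ μ) {j : ℕ} {e : ℝ} {r : Bool}
    (hD : critSeg μ (j + 1) = branchImage μ r (critSeg μ j))
    (hside : if r then 1/2 ≤ e else e ≤ 1/2) (hae : (critSeg μ j).1 ≤ e)
    (h₀ : 0 ≤ (critSeg μ (j + 1)).1) (hle : (critSeg μ (j + 1)).2 ≤ μ / 2)
    (he : Anchored μ j e) : Anchored μ (j + 1) (tentMap μ e) := by
  rcases he with rfl | ⟨t, htj, rfl, hat, hct⟩
  · left
    simp [tentMap]
  by_cases hr : decide (1/2 ≤ (critSeg μ t).1 ∨ 1/2 < critOrbit μ (t + 1)) = r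
  · refine Or.inr ⟨t + 1, by omega, (critOrbit_succ _).symm, ?_⟩
    rw [critSeg_succ, hr, hD]
    exact branchImage_mono hμ r hat hct
  · -- the branches taken at times `t` and `j` differ only if `c_{t+1} = 1/2`
    have hhalf : critOrbit μ (t + 1) = 1/2 := by
      cases r <;>
        simp only [Bool.false_eq_true, ↓reduceIte, decide_eq_true_eq, decide_eq_false_iff_not,
          not_or, not_le, not_lt] at hr hside <;>
        grind
    rw [hhalf, tentMap_half]
    exact anchored_div_two h₀ hle

structure CritSegInv (μ : ℝ) (j : ℕ) : Prop where
  nonneg : 0 ≤ (critSeg μ j).1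
  lt : (critSeg μ j).1 < (critSeg μ j).2
  le_div_two : (critSeg μ j).2 ≤ μ / 2
  critOrbit_eq : critOrbit μ (j + 1) = (critSeg μ j).1 ∨ critOrbit μ (j + 1) = (critSeg μ j).2
  anchored_fst : Anchored μ j (critSeg μ j).1
  anchored_snd : Anchored μ j (critSeg μ j).2

lemma CritSegInv.critOrbit_mem_Icc {j : ℕ} (h : CritSegInv μ j) :
    (critSeg μ j).1 ≤ critOrbit μ (j + 1) ∧ critOrbit μ (j + 1) ≤ (critSeg μ j).2 := by
  rcases h.critOrbit_eq with h' | h' <;> rw [h'] <;> constructor <;> linarith [h.lt]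

lemma critSegInv_zero (hμ : 0 < μ) : CritSegInv μ 0 where
  nonneg := le_rfl
  lt := half_pos hμ
  le_div_two := le_rfl
  critOrbit_eq := Or.inr critOrbit_one
  anchored_fst := Or.inl rfl
  anchored_snd := anchored_div_two le_rfl le_rfl

lemma CritSegInv.succ_of_left (hμ : 0 < μ) {j : ℕ} (h : CritSegInv μ j)
    (hr : ¬(1/2 ≤ (critSeg μ j).1 ∨ 1/2 < critOrbit μ (j + 1))) : CritSegInv μ (j + 1) := by
  have hD : critSeg μ (j + 1) = branchImage μ false (critSeg μ j) := by
    rw [critSeg_succ, decide_eq_false hr]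
  push Not at hr
  have hD' : critSeg μ (j + 1) =
      (tentMap μ (critSeg μ j).1, tentMap μ (min (critSeg μ j).2 (1/2))) := by
    rw [hD, branchImage, tentMap_of_le_half hr.1.le, tentMap_of_le_half (min_le_right _ _)]
    rfl
  have h₀ : 0 ≤ (critSeg μ (j + 1)).1 := by
    rw [hD', tentMap_of_le_half hr.1.le]; exact mul_nonneg hμ.le h.nonneg
  have hle : (critSeg μ (j + 1)).2 ≤ μ / 2 := by
    rw [hD', tentMap_of_le_half (min_le_right _ _)]; nlinarith [min_le_right (critSeg μ j).2 (1/2)]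
  refine ⟨h₀, ?_, hle, ?_, ?_, ?_⟩
  · rw [hD', tentMap_of_le_half hr.1.le, tentMap_of_le_half (min_le_right _ _)]
    exact mul_lt_mul_of_pos_left (lt_min h.lt hr.1) hμ
  · rw [critOrbit_succ, hD']
    rcases h.critOrbit_eq with h' | h'
    · exact Or.inl (by rw [h'])
    · exact Or.inr (by rw [h', min_eq_left (h' ▸ hr.2)])
  · rw [hD']
    exact h.anchored_fst.tentMap_of_branch hμ.le hD hr.1.le le_rfl h₀ hle
  · rw [hD']
    rcases le_total (critSeg μ j).2 (1/2) with hc' | hc'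
    · rw [min_eq_left hc']
      exact h.anchored_snd.tentMap_of_branch hμ.le hD hc' h.lt.le h₀ hle
    · rw [min_eq_right hc', tentMap_half]
      exact anchored_div_two h₀ hle

lemma CritSegInv.succ_of_right (hμ : 0 < μ) (hμ2 : μ ≤ 2) {j : ℕ} (h : CritSegInv μ j)
    (hr : 1/2 ≤ (critSeg μ j).1 ∨ 1/2 < critOrbit μ (j + 1)) : CritSegInv μ (j + 1) := by
  have hD : critSeg μ (j + 1) = branchImage μ true (critSeg μ j) := by
    rw [critSeg_succ, decide_eq_true hr]
  have hc : 1/2 < (critSeg μ j).2 := by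
    rcases hr with hr | hr
    · exact hr.trans_lt h.lt
    · exact hr.trans_le h.critOrbit_mem_Icc.2
  have hD' : critSeg μ (j + 1) =
      (tentMap μ (critSeg μ j).2, tentMap μ (max (critSeg μ j).1 (1/2))) := by
    rw [hD, branchImage, tentMap_of_half_le hc.le, tentMap_of_half_le (le_max_right _ _)]
    rfl
  have h₀ : 0 ≤ (critSeg μ (j + 1)).1 := by
    rw [hD', tentMap_of_half_le hc.le]; nlinarith [h.le_div_two]
  have hle : (critSeg μ (j + 1)).2 ≤ μ / 2 := by
    rw [hD', tentMap_of_half_le (le_max_right _ _)]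
    nlinarith [le_max_right (critSeg μ j).1 (1/2)]
  refine ⟨h₀, ?_, hle, ?_, ?_, ?_⟩
  · rw [hD', tentMap_of_half_le hc.le, tentMap_of_half_le (le_max_right _ _)]
    exact mul_lt_mul_of_pos_left (by linarith [max_lt h.lt hc]) hμ
  · rw [critOrbit_succ, hD']
    rcases h.critOrbit_eq with h' | h'
    · have ha : 1/2 ≤ (critSeg μ j).1 := by rcases hr with hr | hr <;> linarith
      exact Or.inr (by rw [h', max_eq_left ha])
    · exact Or.inl (by rw [h'])
  · rw [hD']
    exact h.anchored_snd.tentMap_of_branch hμ.le hD hc.le h.lt.le h₀ hle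
  · rw [hD']
    rcases le_total (critSeg μ j).1 (1/2) with ha | ha
    · rw [max_eq_right ha, tentMap_half]
      exact anchored_div_two h₀ hle
    · rw [max_eq_left ha]
      exact h.anchored_fst.tentMap_of_branch hμ.le hD ha le_rfl h₀ hle

lemma critSegInv (hμ : 0 < μ) (hμ2 : μ ≤ 2) (j : ℕ) : CritSegInv μ j := by
  induction j with
  | zero => exact critSegInv_zero hμ
  | succ j ih =>
    by_cases hr : 1/2 ≤ (critSeg μ j).1 ∨ 1/2 < critOrbit μ (j + 1)
    · exact ih.succ_of_right hμ hμ2 hr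
    · exact ih.succ_of_left hμ hr

-- The endpoint of a straddling `critSeg μ j` on the side of `r` is anchored at some
-- `critSeg μ t ⊇ critSeg μ j`, which straddled `1/2` as well and so already produced this
-- branch at time `t + 1`.
lemma exists_critSeg_eq_branchImage_of_straddle (hμ : 0 < μ) (hμ2 : μ ≤ 2) {j : ℕ}
    (ha : (critSeg μ j).1 < 1/2) (hc : 1/2 < (critSeg μ j).2) (r : Bool) :
    ∃ s ≤ j + 1, critSeg μ s = branchImage μ r (critSeg μ j) := by
  cases r
  · rcases (critSegInv hμ hμ2 j).anchored_fst with h0 | ⟨t, htj, hcrit, hat, hct⟩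
    · refine ⟨0, by omega, ?_⟩
      simp only [critSeg, branchImage, Bool.false_eq_true, ↓reduceIte, h0, min_eq_right hc.le]
      ext <;> simp only <;> ring
    have hat' : (critSeg μ t).1 = (critSeg μ j).1 := by
      rcases (critSegInv hμ hμ2 t).critOrbit_eq with h | h
      · rw [← h, hcrit]
      · linarith
    refine ⟨t + 1, by omega, ?_⟩
    rw [critSeg_succ, decide_eq_false (by push Not; constructor <;> linarith)]
    simp only [branchImage, Bool.false_eq_true, ↓reduceIte, hat', min_eq_right (hc.le.trans hct),
      min_eq_right hc.le]
  · rcases (critSegInv hμ hμ2 j).anchored_snd with h0 | ⟨t, htj, hcrit, hat, hct⟩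
    · linarith
    have hct' : (critSeg μ t).2 = (critSeg μ j).2 := by
      rcases (critSegInv hμ hμ2 t).critOrbit_eq with h | h
      · linarith
      · rw [← h, hcrit]
    refine ⟨t + 1, by omega, ?_⟩
    rw [critSeg_succ, decide_eq_true (Or.inr (by linarith))]
    simp only [branchImage, ↓reduceIte, hct', max_eq_right (hat.trans ha.le), max_eq_right ha.le]

lemma exists_critSeg_eq_branchImage (hμ : 0 < μ) (hμ2 : μ ≤ 2) (j : ℕ) (r : Bool)
    (hne : (branchImage μ r (critSeg μ j)).1 < (branchImage μ r (critSeg μ j)).2) :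
    ∃ s ≤ j + 1, critSeg μ s = branchImage μ r (critSeg μ j) := by
  by_cases hr : decide (1/2 ≤ (critSeg μ j).1 ∨ 1/2 < critOrbit μ (j + 1)) = r
  · exact ⟨j + 1, le_rfl, by rw [critSeg_succ, hr]⟩
  have hcrit := (critSegInv hμ hμ2 j).critOrbit_mem_Icc
  -- a branch other than the one taken has positive length only if `critSeg μ j` straddles `1/2`
  apply exists_critSeg_eq_branchImage_of_straddle hμ hμ2 <;>
    cases r <;>
    simp only [branchImage, Bool.false_eq_true, ↓reduceIte, decide_eq_true_eq,
      decide_eq_false_iff_not, not_or, not_le, not_lt, mul_lt_mul_iff_right₀ hμ, lt_min_iff]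
      at hr hne <;>
    grind

lemma segType_tentCode_succ (hμ : 0 < μ) (n : ℕ) (x : ℝ) {I : ℝ × ℝ}
    (hI : segType μ n (tentCode μ n x) = halfOpen ((tentCode μ n x).getLastD false) I) :
    ∃ r, segType μ (n + 1) (tentCode μ (n + 1) x) =
      halfOpen ((tentCode μ (n + 1) x).getLastD false) (branchImage μ r I) := by
  rw [tentCode_succ, segType_append_singleton (tentCode_length n x), hI,
    image_tentMap_halfOpen_inter_nextBit hμ, List.getLastD_concat]
  exact ⟨_, rfl⟩

theorem exists_segType_eq_halfOpen_critSeg (hμ : 0 < μ) (hμ2 : μ ≤ 2) (n : ℕ) {x : ℝ}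
    (hx : x ∈ Ico 0 1) :
    ∃ j ≤ n, segType μ (n + 1) (tentCode μ (n + 1) x) =
      halfOpen ((tentCode μ (n + 1) x).getLastD false) (critSeg μ j) := by
  induction n with
  | zero =>
    obtain ⟨r, hr⟩ := segType_tentCode_succ hμ 0 x (I := (0, 1)) segType_zero
    have h0 : branchImage μ r (0, 1) = critSeg μ 0 := by
      cases r <;> norm_num [branchImage, critSeg] <;> ring
    exact ⟨0, le_rfl, h0 ▸ hr⟩
  | succ n ih =>
    obtain ⟨j, hjn, hj⟩ := ih
    obtain ⟨r, hr⟩ := segType_tentCode_succ hμ (n + 1) x hj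
    have hne : (segType μ (n + 2) (tentCode μ (n + 2) x)).Nonempty := ⟨_, x, hx, rfl, rfl⟩
    rw [hr, halfOpen_nonempty_iff] at hne
    obtain ⟨s, hs, hs'⟩ := exists_critSeg_eq_branchImage hμ hμ2 j r hne
    exact ⟨s, by omega, hs' ▸ hr⟩

end

/-- `|𝒯_n| ≤ 2n`. -/
theorem typeSet_card_le (μ : ℝ) (hμ1 : 1 < μ) (hμ2 : μ < 2) (n : ℕ) (hn : 1 ≤ n) :
    (typeSet μ n).Finite ∧ (typeSet μ n).ncard ≤ 2 * n := by
  obtain ⟨m, rfl⟩ : ∃ m, n = m + 1 := ⟨n - 1, by omega⟩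
  let F : Finset (Set ℝ) := (Finset.range (m + 1) ×ˢ Finset.univ).image
    fun q : ℕ × Bool => halfOpen q.2 (critSeg μ q.1)
  have hsub : typeSet μ (m + 1) ⊆ F := by
    rintro _ ⟨_, ⟨x, hx, rfl⟩, rfl⟩
    obtain ⟨j, hj, h⟩ := exists_segType_eq_halfOpen_critSeg (by linarith) hμ2.le m hx
    exact Finset.mem_image.2
      ⟨(j, _), Finset.mem_product.2 ⟨Finset.mem_range.2 (by omega), Finset.mem_univ _⟩, h.symm⟩
  have hcard : F.card ≤ 2 * (m + 1) :=
    Finset.card_image_le.trans (by simp [mul_comm])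
  exact ⟨F.finite_toSet.subset hsub,
    (ncard_le_ncard hsub F.finite_toSet).trans (by simpa using hcard)⟩
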